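/- Let p be an odd prime and let n, x be p-integral rational numbers with n(n+4x) ≢ 0 (mod p). Then ((n+4x)/p) · Σ_{k=0}^{p-1} C(2k,k) · W_k(x)/(n+4x)^k ≡ (−1)^{(p−1)/2} · W_{(p−1)/2}(−n/4) ≡ (n/p) · Σ_{k=0}^{p-1} C(2k,k)·C(3k,k)·C(6k,3k)/n^{3k} (mod p), where the Legendre symbols (·/p) are evaluated at the residue of the p-integral rational modulo p. -/

import Mathlib

/-- `Wgen n x = Σ_{k=0}^{⌊n/3⌋} C(2k,k)·C(3k,k)·C(n,3k)·x^{n-3k}`. -/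
def Wgen (n : ℕ) (x : ℚ) : ℚ :=
  ∑ k ∈ Finset.range (n / 3 + 1),
    (Nat.choose (2 * k) k : ℚ) * (Nat.choose (3 * k) k : ℚ) *
      (Nat.choose n (3 * k) : ℚ) * x ^ (n - 3 * k)

/-- A rational number is `p`-integral if `p` does not divide its denominator
(in lowest terms). -/
def pIntegral (p : ℕ) (a : ℚ) : Prop := ¬ (p : ℕ) ∣ a.den

/-- For `p`-integral rationals `a, b`, `a ≡ b (mod p)` means that `p` divides
the numerator of `a - b` in lowest terms. -/
def ratCongr (p : ℕ) (a b : ℚ) : Prop := (p : ℤ) ∣ (a - b).num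

/-- The Legendre symbol evaluated at the residue of a `p`-integral rational modulo `p`. -/
def legendreRat (p : ℕ) [Fact p.Prime] (a : ℚ) : ℤ :=
  legendreSym p (((a : ZMod p).val : ℤ))

/-!
Write `q = (p - 1) / 2`. All three quantities reduce modulo `p` to
`Σ_{3j ≤ q} C(2j,j) C(3j,j) C(6j,3j) n^(q-3j)`. Everything rests on `C(2k,k) ≡ (-4)^k C(q,k)` for
`k < p`, since `q ≡ -1/2`. For `k = 3j` (and `4^q ≡ 1`) it turns `(-1)^q W_q(-n/4)` into that sum.
It also kills the terms with `3k > q` of the right-hand sum (where `3k ≥ p`, Kummer's carry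
makes `p ∣ C(3k,k)` instead), after which Euler's criterion `(n/p) ≡ n^q` finishes. Together with `C(q,k) C(k,m) = C(q,m) C(q-m,k-m)` and the binomial theorem
it gives `Σ_k C(2k,k) C(k,m) u^(k-m) v^k ≡ C(2m,m) v^m (1 - 4uv)^(q-m)`, which evaluates the
left-hand sum once each `W_k(x)` is expanded, because `1 - 4x/(n+4x) = n/(n+4x)`.
-/

open Finset

local notation "ℤ₍" p "₎" => Valuation.integer (Rat.padicValuation p)

section Generic

variable {R : Type*} [CommRing R]

def W (n : ℕ) (x : R) : R :=
  ∑ j ∈ range (n / 3 + 1),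
    ((2 * j).choose j : R) * (3 * j).choose j * n.choose (3 * j) * x ^ (n - 3 * j)

def binomWSum (m : ℕ) (x w : R) : R :=
  ∑ k ∈ range m, ((2 * k).choose k : R) * W k x * w ^ k

def tripleBinomSum (m : ℕ) (v : R) : R :=
  ∑ k ∈ range m, ((2 * k).choose k : R) * (3 * k).choose k * (6 * k).choose (3 * k) * v ^ (3 * k)

def reversedTripleBinomSum (q : ℕ) (N : R) : R :=
  ∑ j ∈ range (q / 3 + 1),
    ((2 * j).choose j : R) * (3 * j).choose j * (6 * j).choose (3 * j) * N ^ (q - 3 * j)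

lemma W_eq_sum_range {n m : ℕ} (h : n / 3 < m) (x : R) :
    W n x = ∑ j ∈ range m,
      ((2 * j).choose j : R) * (3 * j).choose j * n.choose (3 * j) * x ^ (n - 3 * j) := by
  refine sum_subset (range_subset_range.2 h) fun j _ hj => ?_
  rw [Nat.choose_eq_zero_of_lt (show n < 3 * j by rw [mem_range] at hj; omega), Nat.cast_zero,
    mul_zero, zero_mul]

variable {S : Type*} [CommRing S] (f : R →+* S)

lemma map_W (n : ℕ) (x : R) : f (W n x) = W n (f x) := by
  simp [W, map_sum]

lemma map_binomWSum (m : ℕ) (x w : R) : f (binomWSum m x w) = binomWSum m (f x) (f w) := by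
  simp [binomWSum, map_sum, map_W]

lemma map_tripleBinomSum (m : ℕ) (v : R) : f (tripleBinomSum m v) = tripleBinomSum m (f v) := by
  simp [tripleBinomSum, map_sum]

end Generic

lemma Wgen_eq_W (n : ℕ) (x : ℚ) : Wgen n x = W n x := rfl

lemma sum_div_pow_eq_binomWSum (m : ℕ) (x a : ℚ) :
    ∑ k ∈ range m, ((2 * k).choose k : ℚ) * Wgen k x / a ^ k = binomWSum m x a⁻¹ := by
  simp only [binomWSum, Wgen_eq_W, div_eq_mul_inv, inv_pow]

lemma sum_div_pow_eq_tripleBinomSum (m : ℕ) (a : ℚ) :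
    ∑ k ∈ range m, ((2 * k).choose k : ℚ) * ((3 * k).choose k : ℚ) * ((6 * k).choose (3 * k) : ℚ)
      / a ^ (3 * k) = tripleBinomSum m a⁻¹ := by
  simp only [tripleBinomSum, div_eq_mul_inv, inv_pow]

namespace Rat

variable (p : ℕ) [Fact p.Prime]

lemma mem_padicValuation_integer_iff {a : ℚ} : a ∈ ℤ₍p₎ ↔ pIntegral p a :=
  padicValuation_le_one_iff

lemma den_cast_ne_zero_of_mem {a : ℚ} (ha : a ∈ ℤ₍p₎) : (a.den : ZMod p) ≠ 0 := by
  rwa [Ne, ZMod.natCast_eq_zero_iff, ← pIntegral, ← mem_padicValuation_integer_iff]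

def residue : ℤ₍p₎ →+* ZMod p where
  toFun a := ((a : ℚ) : ZMod p)
  map_one' := cast_one
  map_mul' a b :=
    cast_mul_of_ne_zero (den_cast_ne_zero_of_mem p a.2) (den_cast_ne_zero_of_mem p b.2)
  map_zero' := cast_zero
  map_add' a b :=
    cast_add_of_ne_zero (den_cast_ne_zero_of_mem p a.2) (den_cast_ne_zero_of_mem p b.2)

variable {p}

lemma residue_apply (a : ℤ₍p₎) : residue p a = ((a : ℚ) : ZMod p) := rfl

lemma residue_eq_zero_iff {a : ℤ₍p₎} : residue p a = 0 ↔ (p : ℤ) ∣ (a : ℚ).num := by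
  rw [residue_apply, cast_def, div_eq_zero_iff, or_iff_left (den_cast_ne_zero_of_mem p a.2),
    ZMod.intCast_zmod_eq_zero_iff_dvd]

lemma ratCongr_iff_residue_eq {a b : ℤ₍p₎} : ratCongr p a b ↔ residue p a = residue p b := by
  rw [← sub_eq_zero, ← map_sub, residue_eq_zero_iff]
  rfl

lemma exists_residue_mul_eq_one {a : ℤ₍p₎} (ha : residue p a ≠ 0) :
    ∃ b : ℤ₍p₎, (b : ℚ) = (a : ℚ)⁻¹ ∧ residue p a * residue p b = 1 := by
  have ha0 : (a : ℚ) ≠ 0 := fun h => ha (by rw [residue_apply, h, cast_zero])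
  have hmem : (a : ℚ)⁻¹ ∈ ℤ₍p₎ := by
    rw [mem_padicValuation_integer_iff, pIntegral, den_inv_of_ne_zero ha0, ← Int.natCast_dvd]
    rwa [Ne, residue_eq_zero_iff] at ha
  refine ⟨⟨_, hmem⟩, rfl, ?_⟩
  rw [← map_mul, ← map_one (residue p)]
  exact congrArg _ (Subtype.ext (mul_inv_cancel₀ ha0))

lemma legendreRat_cast_eq_residue_pow (a : ℤ₍p₎) :
    (legendreRat p a : ZMod p) = residue p a ^ (p / 2) := by
  rw [legendreRat, legendreSym.eq_pow, Int.cast_natCast, ZMod.natCast_val, ZMod.cast_id]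
  rfl

@[simp, norm_cast]
lemma coe_integer_ofNat (m : ℕ) [m.AtLeastTwo] :
    (((no_index (OfNat.ofNat m)) : ℤ₍p₎) : ℚ) = OfNat.ofNat m :=
  map_ofNat (padicValuation p).integer.subtype m

def HasResidue (a : ℚ) (r : ZMod p) : Prop :=
  ∃ b : ℤ₍p₎, (b : ℚ) = a ∧ residue p b = r

lemma hasResidue_residue (a : ℤ₍p₎) : HasResidue (a : ℚ) (residue p a) :=
  ⟨a, rfl, rfl⟩

lemma HasResidue.ratCongr {a b : ℚ} {r : ZMod p} (ha : HasResidue a r) (hb : HasResidue b r) :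
    ratCongr p a b := by
  obtain ⟨a, rfl, rfl⟩ := ha
  obtain ⟨b, rfl, hb⟩ := hb
  exact ratCongr_iff_residue_eq.2 hb.symm

end Rat

lemma Nat.Prime.two_mul_half_add_one {p : ℕ} (hp : p.Prime) (hp2 : p ≠ 2) :
    2 * ((p - 1) / 2) + 1 = p := by
  have := hp.mod_two_eq_one_iff_ne_two.2 hp2
  omega

namespace ZMod

variable {p : ℕ} [Fact p.Prime]

lemma natCast_ne_zero_of_pos_of_lt {a : ℕ} (h0 : 0 < a) (hlt : a < p) : (a : ZMod p) ≠ 0 := by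
  rw [Ne, natCast_eq_zero_iff]
  exact fun hdvd => absurd (Nat.le_of_dvd h0 hdvd) (by omega)

lemma two_mul_half_add_one (hp2 : p ≠ 2) : 2 * (((p - 1) / 2 : ℕ) : ZMod p) + 1 = 0 := by
  have h : ((2 * ((p - 1) / 2) + 1 : ℕ) : ZMod p) = 0 := by
    rw [(Fact.out : p.Prime).two_mul_half_add_one hp2, natCast_self]
  exact_mod_cast h

lemma two_ne_zero_of_ne_two (hp2 : p ≠ 2) : (2 : ZMod p) ≠ 0 :=
  Ring.two_ne_zero (by rwa [ringChar_zmod_n])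

lemma four_pow_half (hp2 : p ≠ 2) : (4 : ZMod p) ^ ((p - 1) / 2) = 1 := by
  have := (Fact.out : p.Prime).two_mul_half_add_one hp2
  rw [show (4 : ZMod p) = 2 ^ 2 by norm_num, ← pow_mul, show 2 * ((p - 1) / 2) = p - 1 by omega]
  exact pow_card_sub_one_eq_one (two_ne_zero_of_ne_two hp2)

/-- `C(2k, k) = (-4)^k C(-1/2, k)`, and `(p - 1) / 2 ≡ -1/2 (mod p)`. -/
theorem centralBinom_cast_eq (hp2 : p ≠ 2) {k : ℕ} (hk : k < p) :
    ((2 * k).choose k : ZMod p) = (-4) ^ k * ((p - 1) / 2).choose k := by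
  induction k with
  | zero => simp
  | succ k ih =>
    set q := (p - 1) / 2
    have hcentral := congrArg (Nat.cast (R := ZMod p)) (Nat.succ_mul_centralBinom_succ k)
    have hq := congrArg (Nat.cast (R := ZMod p)) (Nat.choose_succ_right_eq q k)
    simp only [Nat.centralBinom_eq_two_mul_choose, Nat.cast_mul, Nat.cast_add, Nat.cast_ofNat,
      Nat.cast_one] at hcentral hq
    have hstep : (2 * (2 * k + 1) : ZMod p) * q.choose k
        = -4 * q.choose k * ((q - k : ℕ) : ZMod p) := by
      rcases le_or_gt k q with hkq | hkq
      · rw [Nat.cast_sub hkq]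
        linear_combination (2 * (q.choose k : ZMod p)) * two_mul_half_add_one hp2
      · simp [Nat.choose_eq_zero_of_lt hkq]
    apply mul_left_cancel₀ (natCast_ne_zero_of_pos_of_lt (a := k + 1) (by omega) hk)
    push_cast
    linear_combination hcentral + 2 * (2 * (k : ZMod p) + 1) * ih (by omega)
      - (-4) ^ (k + 1) * hq + (-4) ^ k * hstep

lemma centralBinom_cast_eq_zero (hp2 : p ≠ 2) {k : ℕ} (hqk : (p - 1) / 2 < k) (hk : k < p) :
    ((2 * k).choose k : ZMod p) = 0 := by
  rw [centralBinom_cast_eq hp2 hk, Nat.choose_eq_zero_of_lt hqk, Nat.cast_zero, mul_zero]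

lemma tripleBinom_cast_eq_zero (hp2 : p ≠ 2) {k : ℕ} (hqk : (p - 1) / 2 < 3 * k) (hk : k < p) :
    ((2 * k).choose k : ZMod p) * (3 * k).choose k * (6 * k).choose (3 * k) = 0 := by
  rcases lt_or_ge ((p - 1) / 2) k with hkq | hkq
  · rw [centralBinom_cast_eq_zero hp2 hkq hk, zero_mul, zero_mul]
  rcases lt_or_ge (3 * k) p with h3k | h3k
  · rw [show 6 * k = 2 * (3 * k) by ring, centralBinom_cast_eq_zero hp2 hqk h3k, mul_zero]
  · have hcarry := (Fact.out : p.Prime).dvd_choose_add hk (show 2 * k < p by omega) (by omega)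
    rw [show k + 2 * k = 3 * k by ring, ← natCast_eq_zero_iff] at hcarry
    rw [hcarry, mul_zero, zero_mul]

lemma sum_centralBinom_mul_choose (hp2 : p ≠ 2) {m : ℕ} (hm : m ≤ (p - 1) / 2) (u v : ZMod p) :
    ∑ k ∈ range ((p - 1) / 2 + 1), ((2 * k).choose k : ZMod p) * k.choose m * u ^ (k - m) * v ^ k
      = (2 * m).choose m * v ^ m * (1 - 4 * u * v) ^ ((p - 1) / 2 - m) := by
  have hp := (Fact.out : p.Prime).two_mul_half_add_one hp2
  set q := (p - 1) / 2
  rw [← sum_range_add_sum_Ico _ (hm.trans q.le_succ),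
    sum_eq_zero fun k hk => by simp [Nat.choose_eq_zero_of_lt (mem_range.1 hk)], zero_add,
    sum_Ico_eq_sum_range, show q + 1 - m = q - m + 1 by omega,
    show 1 - 4 * u * v = -4 * u * v + 1 by ring, add_pow, mul_sum]
  refine sum_congr rfl fun i hi => ?_
  have hi : m + i ≤ q := by have := mem_range.1 hi; omega
  have hchoose := congrArg (Nat.cast (R := ZMod p)) (Nat.choose_mul (n := q) (m.le_add_right i))
  rw [Nat.add_sub_cancel_left] at hchoose
  push_cast at hchoose
  rw [centralBinom_cast_eq hp2 (show m + i < p by omega),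
    centralBinom_cast_eq hp2 (show m < p by omega), Nat.add_sub_cancel_left]
  linear_combination (-4) ^ (m + i) * u ^ i * v ^ (m + i) * hchoose

theorem pow_mul_binomWSum (hp2 : p ≠ 2) {N X w : ZMod p} (h : (N + 4 * X) * w = 1) :
    (N + 4 * X) ^ ((p - 1) / 2) * binomWSum p X w = reversedTripleBinomSum ((p - 1) / 2) N := by
  have hp := (Fact.out : p.Prime).two_mul_half_add_one hp2
  set q := (p - 1) / 2
  have htrunc : binomWSum p X w
      = ∑ k ∈ range (q + 1), ((2 * k).choose k : ZMod p) * W k X * w ^ k :=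
    (sum_subset (range_subset_range.2 (by omega)) fun k hk hkq => by
      rw [centralBinom_cast_eq_zero hp2 (by rw [mem_range] at hkq; omega) (mem_range.1 hk),
        zero_mul, zero_mul]).symm
  have hswap : ∑ k ∈ range (q + 1), ((2 * k).choose k : ZMod p) * W k X * w ^ k
      = ∑ j ∈ range (q / 3 + 1), ((2 * j).choose j : ZMod p) * (3 * j).choose j *
          ∑ k ∈ range (q + 1),
            ((2 * k).choose k : ZMod p) * k.choose (3 * j) * X ^ (k - 3 * j) * w ^ k := by
    rw [sum_congr rfl fun k hk => by
      rw [W_eq_sum_range (m := q / 3 + 1) (by rw [mem_range] at hk; omega), mul_sum, sum_mul],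
      sum_comm]
    exact sum_congr rfl fun j _ => by rw [mul_sum]; exact sum_congr rfl fun k _ => by ring
  rw [htrunc, hswap, reversedTripleBinomSum, mul_sum]
  refine sum_congr rfl fun j hj => ?_
  have hj : 3 * j ≤ q := by rw [mem_range] at hj; omega
  have hunit : (N + 4 * X) ^ q * (w ^ (3 * j) * w ^ (q - 3 * j)) = 1 := by
    rw [← pow_add, Nat.add_sub_cancel' hj, ← mul_pow, h, one_pow]
  rw [sum_centralBinom_mul_choose hp2 hj, show 1 - 4 * X * w = N * w by linear_combination -h,
    mul_pow, show 2 * (3 * j) = 6 * j by ring]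
  linear_combination (((2 * j).choose j : ZMod p) * (3 * j).choose j * (6 * j).choose (3 * j)
    * N ^ (q - 3 * j)) * hunit

theorem neg_one_pow_mul_W_half (hp2 : p ≠ 2) {N Y : ZMod p} (h : 4 * Y = -N) :
    (-1) ^ ((p - 1) / 2) * W ((p - 1) / 2) Y = reversedTripleBinomSum ((p - 1) / 2) N := by
  have hp := (Fact.out : p.Prime).two_mul_half_add_one hp2
  set q := (p - 1) / 2
  rw [W, reversedTripleBinomSum, mul_sum]
  refine sum_congr rfl fun j hj => ?_
  have hj : 3 * j ≤ q := by rw [mem_range] at hj; omega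
  have hsign : (-1 : ZMod p) ^ q = (-4) ^ (3 * j) * (-4) ^ (q - 3 * j) := by
    rw [← pow_add, Nat.add_sub_cancel' hj, show (-4 : ZMod p) = -1 * 4 by ring, mul_pow,
      four_pow_half hp2, mul_one]
  rw [show 6 * j = 2 * (3 * j) by ring, centralBinom_cast_eq hp2 (show 3 * j < p by omega),
    show N = -4 * Y by linear_combination h, mul_pow, hsign]
  ring

theorem pow_mul_tripleBinomSum (hp2 : p ≠ 2) {N V : ZMod p} (h : N * V = 1) :
    N ^ ((p - 1) / 2) * tripleBinomSum p V = reversedTripleBinomSum ((p - 1) / 2) N := by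
  have hp := (Fact.out : p.Prime).two_mul_half_add_one hp2
  set q := (p - 1) / 2
  rw [tripleBinomSum, ← sum_subset (range_subset_range.2 (show q / 3 + 1 ≤ p by omega))
    fun k hk hkq => by
      rw [tripleBinom_cast_eq_zero hp2 (by rw [mem_range] at hkq; omega) (mem_range.1 hk),
        zero_mul],
    reversedTripleBinomSum, mul_sum]
  refine sum_congr rfl fun j hj => ?_
  have hj : 3 * j ≤ q := by rw [mem_range] at hj; omega
  have hpow : N ^ q * V ^ (3 * j) = N ^ (q - 3 * j) := by
    rw [← Nat.sub_add_cancel hj, pow_add, mul_assoc, ← mul_pow, h, one_pow, mul_one,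
      Nat.sub_add_cancel hj]
  linear_combination
    (((2 * j).choose j : ZMod p) * (3 * j).choose j * (6 * j).choose (3 * j)) * hpow

end ZMod

section Reduction

open Rat

variable {p : ℕ} [Fact p.Prime]

lemma hasResidue_legendreRat_mul_sum_Wgen (hp2 : p ≠ 2) {n x : ℤ₍p₎}
    (hM : residue p (n + 4 * x) ≠ 0) :
    HasResidue ((legendreRat p (n + 4 * x : ℚ) : ℚ) *
        ∑ k ∈ range p, ((2 * k).choose k : ℚ) * Wgen k x / (n + 4 * x : ℚ) ^ k)
      (reversedTripleBinomSum ((p - 1) / 2) (residue p n)) := by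
  obtain ⟨w, hw, hMw⟩ := exists_residue_mul_eq_one hM
  convert hasResidue_residue
    ((legendreRat p ((n + 4 * x : ℤ₍p₎) : ℚ) : ℤ₍p₎) * binomWSum p x w) using 1
  · push_cast at hw ⊢
    rw [sum_div_pow_eq_binomWSum, ← hw, ← Subring.coe_subtype, map_binomWSum]
  · rw [map_add, map_mul, map_ofNat] at hMw
    rw [map_mul, map_intCast, legendreRat_cast_eq_residue_pow, map_binomWSum, map_add, map_mul,
      map_ofNat, ← ZMod.pow_mul_binomWSum hp2 hMw]
    have := (Fact.out : p.Prime).two_mul_half_add_one hp2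
    congr 2
    omega

lemma hasResidue_neg_one_pow_mul_Wgen (hp2 : p ≠ 2) (n : ℤ₍p₎) :
    HasResidue ((-1 : ℚ) ^ ((p - 1) / 2) * Wgen ((p - 1) / 2) (-n / 4))
      (reversedTripleBinomSum ((p - 1) / 2) (residue p n)) := by
  have h4 : residue p 4 ≠ 0 := by
    rw [map_ofNat, show (4 : ZMod p) = 2 * 2 by norm_num]
    exact mul_ne_zero (ZMod.two_ne_zero_of_ne_two hp2) (ZMod.two_ne_zero_of_ne_two hp2)
  obtain ⟨i4, hi4, h4i⟩ := exists_residue_mul_eq_one h4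
  convert hasResidue_residue ((-1) ^ ((p - 1) / 2) * W ((p - 1) / 2) (-n * i4)) using 1
  · push_cast at hi4 ⊢
    rw [Wgen_eq_W, ← Subring.coe_subtype, map_W, Subring.coe_subtype]
    push_cast
    rw [hi4, div_eq_mul_inv]
  · rw [map_ofNat] at h4i
    rw [map_mul, map_pow, map_neg, map_one, map_W]
    refine (ZMod.neg_one_pow_mul_W_half hp2 ?_).symm
    rw [map_mul, map_neg]
    linear_combination -residue p n * h4i

lemma hasResidue_legendreRat_mul_sum_choose (hp2 : p ≠ 2) {n : ℤ₍p₎} (hn : residue p n ≠ 0) :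
    HasResidue ((legendreRat p n : ℚ) *
        ∑ k ∈ range p, ((2 * k).choose k : ℚ) * ((3 * k).choose k : ℚ) *
          ((6 * k).choose (3 * k) : ℚ) / (n : ℚ) ^ (3 * k))
      (reversedTripleBinomSum ((p - 1) / 2) (residue p n)) := by
  obtain ⟨v, hv, hnv⟩ := exists_residue_mul_eq_one hn
  convert hasResidue_residue ((legendreRat p n : ℤ₍p₎) * tripleBinomSum p v) using 1
  · push_cast at hv ⊢
    rw [sum_div_pow_eq_tripleBinomSum, ← hv, ← Subring.coe_subtype, map_tripleBinomSum]
  · rw [map_mul, map_intCast, legendreRat_cast_eq_residue_pow, map_tripleBinomSum,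
      ← ZMod.pow_mul_tripleBinomSum hp2 hnv]
    have := (Fact.out : p.Prime).two_mul_half_add_one hp2
    congr 2
    omega

end Reduction

theorem legendre_sum_choose_Wgen (p : ℕ) [Fact p.Prime] (hodd : p ≠ 2) (n x : ℚ)
    (hn : pIntegral p n) (hx : pIntegral p x)
    (h : ¬ ratCongr p (n * (n + 4 * x)) 0) :
    ratCongr p
      ((legendreRat p (n + 4 * x) : ℚ) *
        ∑ k ∈ Finset.range p, (Nat.choose (2 * k) k : ℚ) * Wgen k x / (n + 4 * x) ^ k)
      ((-1 : ℚ) ^ ((p - 1) / 2) * Wgen ((p - 1) / 2) (-n / 4)) ∧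
    ratCongr p
      ((-1 : ℚ) ^ ((p - 1) / 2) * Wgen ((p - 1) / 2) (-n / 4))
      ((legendreRat p n : ℚ) *
        ∑ k ∈ Finset.range p,
          (Nat.choose (2 * k) k : ℚ) * (Nat.choose (3 * k) k : ℚ) *
            (Nat.choose (6 * k) (3 * k) : ℚ) / n ^ (3 * k)) := by
  obtain ⟨n, rfl⟩ : ∃ n' : ℤ₍p₎, (n' : ℚ) = n :=
    ⟨⟨n, (Rat.mem_padicValuation_integer_iff p).2 hn⟩, rfl⟩
  obtain ⟨x, rfl⟩ : ∃ x' : ℤ₍p₎, (x' : ℚ) = x :=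
    ⟨⟨x, (Rat.mem_padicValuation_integer_iff p).2 hx⟩, rfl⟩
  have hnM : Rat.residue p n * Rat.residue p (n + 4 * x) ≠ 0 := by
    rw [← map_mul, ← map_zero (Rat.residue p), Ne, ← Rat.ratCongr_iff_residue_eq]
    exact_mod_cast h
  have hmiddle := hasResidue_neg_one_pow_mul_Wgen hodd n
  exact ⟨(hasResidue_legendreRat_mul_sum_Wgen hodd (right_ne_zero_of_mul hnM)).ratCongr hmiddle,
    hmiddle.ratCongr (hasResidue_legendreRat_mul_sum_choose hodd (left_ne_zero_of_mul hnM))⟩
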